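/- The complete bipartite graph K_{2,t} with t ≥ 2 is γ-(t+1)-critical: subdividing any t+1 edges increases the domination number, while some set of t edges can be subdivided without increasing it. -/

import Mathlib

open SimpleGraph

/-- `D` is a dominating set of `G`. -/
def SimpleGraph.IsDomSet {V : Type*} (G : SimpleGraph V) (D : Set V) : Prop :=
  ∀ v ∉ D, ∃ u ∈ D, G.Adj u v

/-- The domination number of `G`. -/
noncomputable def SimpleGraph.domNum {V : Type*} [Fintype V] (G : SimpleGraph V) : ℕ :=
  sInf {k | ∃ D : Finset V, D.card = k ∧ G.IsDomSet ↑D}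

/-- The graph obtained from `G` by subdividing each edge in `F` once: each `e ∈ F`
contributes a new vertex adjacent to the two endpoints of `e`, and the edges of `F`
are removed. -/
def SimpleGraph.subdiv {V : Type*} (G : SimpleGraph V) (F : Finset (Sym2 V)) :
    SimpleGraph (V ⊕ {e : Sym2 V // e ∈ F}) :=
  SimpleGraph.fromRel (fun a b => match a, b with
    | Sum.inl u, Sum.inl v => G.Adj u v ∧ s(u, v) ∉ F
    | Sum.inl u, Sum.inr e => u ∈ (e : Sym2 V)
    | _, _ => False)

/-- `G` is `γ`-`q`-critical: subdividing any `q` edges increases the domination number,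
while some set of `q - 1` edges can be subdivided without increasing it. -/
def SimpleGraph.IsQCritical {V : Type*} [Fintype V] (G : SimpleGraph V) (q : ℕ) : Prop :=
  (∀ F : Finset (Sym2 V), ↑F ⊆ G.edgeSet → F.card = q →
      G.domNum < (G.subdiv F).domNum) ∧
  (∃ F : Finset (Sym2 V), ↑F ⊆ G.edgeSet ∧ F.card = q - 1 ∧
      (G.subdiv F).domNum = G.domNum)

/-!
If every vertex of a graph `H` has degree at most `Δ`, each vertex dominates at most `Δ + 1`
vertices, so `γ(H) * (Δ + 1) ≥ |V(H)|`. Subdividing edges of `K_{2,t}` with `t ≥ 2` keeps all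
degrees at most `t`, since the new vertices have degree 2. Subdividing `t + 1` edges gives
`2t + 3 > 2(t + 1)` vertices, hence `γ ≥ 3`; the same count gives `γ(K_{2,t}) ≥ 2`. On the other
hand, after subdividing the `t` edges at one vertex `a₀` of the 2-side, `{a₀, a₁}` still
dominates: `a₁` sees the whole `t`-side and `a₀` every subdivision vertex.
-/

namespace SimpleGraph

section Domination

variable {V : Type*} [Fintype V] (G : SimpleGraph V)

theorem domNum_le_card {D : Finset V} (hD : G.IsDomSet ↑D) : G.domNum ≤ D.card :=
  Nat.sInf_le ⟨D, rfl, hD⟩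

theorem exists_isDomSet_card_eq_domNum : ∃ D : Finset V, D.card = G.domNum ∧ G.IsDomSet ↑D :=
  Nat.sInf_mem (s := {k | ∃ D : Finset V, D.card = k ∧ G.IsDomSet ↑D})
    ⟨_, Finset.univ, rfl, fun v hv => (hv (Finset.mem_coe.2 (Finset.mem_univ v))).elim⟩

variable [DecidableEq V] [DecidableRel G.Adj]

theorem card_le_card_mul_of_isDomSet {Δ : ℕ} (hΔ : ∀ v, G.degree v ≤ Δ) {D : Finset V}
    (hD : G.IsDomSet ↑D) : Fintype.card V ≤ D.card * (Δ + 1) := by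
  have hcover : Finset.univ ⊆ D.biUnion fun u => insert u (G.neighborFinset u) := by
    intro v _
    by_cases hv : v ∈ D
    · exact Finset.mem_biUnion.2 ⟨v, hv, Finset.mem_insert_self v _⟩
    · obtain ⟨u, hu, huv⟩ := hD v hv
      exact Finset.mem_biUnion.2
        ⟨u, hu, Finset.mem_insert_of_mem ((G.mem_neighborFinset u v).2 huv)⟩
  calc Fintype.card V ≤ _ := Finset.card_le_card hcover
    _ ≤ D.card * (Δ + 1) := Finset.card_biUnion_le_card_mul _ _ _ fun u _ =>
      (Finset.card_insert_le _ _).trans (Nat.succ_le_succ (hΔ u))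

theorem card_le_domNum_mul {Δ : ℕ} (hΔ : ∀ v, G.degree v ≤ Δ) :
    Fintype.card V ≤ G.domNum * (Δ + 1) := by
  obtain ⟨D, hcard, hD⟩ := G.exists_isDomSet_card_eq_domNum
  exact hcard ▸ G.card_le_card_mul_of_isDomSet hΔ hD

theorem lt_domNum_of_mul_lt_card {Δ n : ℕ} (hΔ : ∀ v, G.degree v ≤ Δ)
    (h : n * (Δ + 1) < Fintype.card V) : n < G.domNum :=
  Nat.lt_of_mul_lt_mul_right (h.trans_le (G.card_le_domNum_mul hΔ))

end Domination

section Subdivision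

variable {V : Type*} (G : SimpleGraph V) (F : Finset (Sym2 V))

@[simp]
theorem subdiv_adj_inl_inl {u v : V} :
    (G.subdiv F).Adj (.inl u) (.inl v) ↔ G.Adj u v ∧ s(u, v) ∉ F := by
  simp only [subdiv, fromRel_adj, ne_eq, Sum.inl.injEq]
  constructor
  · rintro ⟨-, h | ⟨huv, hF⟩⟩
    · exact h
    · exact ⟨huv.symm, Sym2.eq_swap ▸ hF⟩
  · exact fun h => ⟨h.1.ne, .inl h⟩

@[simp]
theorem subdiv_adj_inl_inr {u : V} {e : {e : Sym2 V // e ∈ F}} :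
    (G.subdiv F).Adj (.inl u) (.inr e) ↔ u ∈ (e : Sym2 V) := by
  simp [subdiv]

@[simp]
theorem subdiv_adj_inr_inr {e f : {e : Sym2 V // e ∈ F}} :
    ¬ (G.subdiv F).Adj (.inr e) (.inr f) := by
  simp [subdiv]

variable [Fintype V] [DecidableEq V] [DecidableRel (G.subdiv F).Adj]

theorem degree_subdiv_inl_le [DecidableRel G.Adj] (hF : ↑F ⊆ G.edgeSet) (u : V) :
    (G.subdiv F).degree (.inl u) ≤ G.degree u := by
  let g : V → V ⊕ {e : Sym2 V // e ∈ F} := fun v =>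
    if h : s(u, v) ∈ F then .inr ⟨_, h⟩ else .inl v
  suffices (G.subdiv F).neighborFinset (.inl u) ⊆ (G.neighborFinset u).image g by
    simpa only [← card_neighborFinset_eq_degree] using
      (Finset.card_le_card this).trans Finset.card_image_le
  intro z hz
  rw [mem_neighborFinset] at hz
  rw [Finset.mem_image]
  rcases z with v | ⟨e, he⟩
  · rw [subdiv_adj_inl_inl] at hz
    exact ⟨v, (G.mem_neighborFinset u v).2 hz.1, dif_neg hz.2⟩
  · rw [subdiv_adj_inl_inr] at hz
    obtain ⟨v, rfl⟩ := Sym2.mem_iff_exists.1 hz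
    exact ⟨v, (G.mem_neighborFinset u v).2 (hF he), dif_pos he⟩

theorem degree_subdiv_inr_le (e : {e : Sym2 V // e ∈ F}) :
    (G.subdiv F).degree (.inr e) ≤ 2 := by
  obtain ⟨e, he⟩ := e
  induction e with
  | h a b =>
    suffices (G.subdiv F).neighborFinset (.inr ⟨s(a, b), he⟩) ⊆ {.inl a, .inl b} by
      simpa only [← card_neighborFinset_eq_degree] using
        (Finset.card_le_card this).trans Finset.card_le_two
    intro z hz
    rw [mem_neighborFinset] at hz
    rcases z with v | f
    · simpa using (subdiv_adj_inl_inr G F).1 hz.symm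
    · exact (subdiv_adj_inr_inr G F hz).elim

theorem degree_subdiv_le [DecidableRel G.Adj] (hF : ↑F ⊆ G.edgeSet) {Δ : ℕ}
    (hΔ : ∀ v, G.degree v ≤ Δ) (h2 : 2 ≤ Δ) : ∀ x, (G.subdiv F).degree x ≤ Δ
  | .inl u => (G.degree_subdiv_inl_le F hF u).trans (hΔ u)
  | .inr e => (G.degree_subdiv_inr_le F e).trans h2

end Subdivision

section CompleteBipartite

variable {V W : Type*} [Fintype V] [Fintype W] [DecidableRel (completeBipartiteGraph V W).Adj]

theorem degree_completeBipartiteGraph_inl (v : V) :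
    (completeBipartiteGraph V W).degree (.inl v) = Fintype.card W := by
  rw [← card_neighborFinset_eq_degree, ← Finset.card_univ,
    ← Finset.card_map (Function.Embedding.inr (α := V) (β := W))]
  congr 1
  ext z
  rcases z with a | b <;> simp

theorem degree_completeBipartiteGraph_inr (w : W) :
    (completeBipartiteGraph V W).degree (.inr w) = Fintype.card V := by
  rw [← card_neighborFinset_eq_degree, ← Finset.card_univ,
    ← Finset.card_map (Function.Embedding.inl (α := V) (β := W))]
  congr 1
  ext z
  rcases z with a | b <;> simp

end CompleteBipartite

section CompleteBipartiteFinTwo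

variable {t : ℕ} [DecidableRel (completeBipartiteGraph (Fin 2) (Fin t)).Adj]

theorem degree_completeBipartiteGraph_fin_two_le (ht : 2 ≤ t) (v : Fin 2 ⊕ Fin t) :
    (completeBipartiteGraph (Fin 2) (Fin t)).degree v ≤ t := by
  rcases v with i | j
  · simp [degree_completeBipartiteGraph_inl]
  · simpa [degree_completeBipartiteGraph_inr] using ht

theorem domNum_completeBipartiteGraph_fin_two (ht : 2 ≤ t) :
    (completeBipartiteGraph (Fin 2) (Fin t)).domNum = 2 := by
  refine le_antisymm ?_ ?_
  · have hD : (completeBipartiteGraph (Fin 2) (Fin t)).IsDomSet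
      ↑({.inl 0, .inl 1} : Finset (Fin 2 ⊕ Fin t)) := by
      rintro (i | j) hv
      · fin_cases i <;> simp at hv
      · exact ⟨.inl 0, by simp, by simp⟩
    exact (domNum_le_card _ hD).trans Finset.card_le_two
  · refine lt_domNum_of_mul_lt_card _ (degree_completeBipartiteGraph_fin_two_le ht) ?_
    simp only [Fintype.card_sum, Fintype.card_fin]
    omega

theorem domNum_completeBipartiteGraph_fin_two_subdiv_incidenceFinset_le :
    ((completeBipartiteGraph (Fin 2) (Fin t)).subdiv
      ((completeBipartiteGraph (Fin 2) (Fin t)).incidenceFinset (.inl 0))).domNum ≤ 2 := by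
  refine (domNum_le_card _ (D := {.inl (.inl 0), .inl (.inl 1)}) ?_).trans Finset.card_le_two
  rintro ((i | j) | ⟨e, he⟩) hv
  · fin_cases i <;> simp at hv
  · refine ⟨.inl (.inl 1), by simp, ?_⟩
    simp [mem_incidenceFinset, incidenceSet]
  · refine ⟨.inl (.inl 0), by simp, ?_⟩
    simpa using ((mem_incidenceFinset _ _ _).1 he).2

end CompleteBipartiteFinTwo

end SimpleGraph

theorem stmt7 (t : ℕ) (ht : 2 ≤ t) :
    (completeBipartiteGraph (Fin 2) (Fin t)).IsQCritical (t + 1) := by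
  classical
  set K := completeBipartiteGraph (Fin 2) (Fin t)
  have hK : ∀ v, K.degree v ≤ t := degree_completeBipartiteGraph_fin_two_le ht
  have hstar : K.degree (.inl 0) = t :=
    (degree_completeBipartiteGraph_inl 0).trans (Fintype.card_fin t)
  have hstarE : ↑(K.incidenceFinset (.inl 0)) ⊆ K.edgeSet := by
    simpa only [coe_incidenceFinset] using K.incidenceSet_subset (.inl 0)
  refine ⟨fun F hF hcard => ?_, K.incidenceFinset (.inl 0), hstarE, ?_, ?_⟩
  · rw [domNum_completeBipartiteGraph_fin_two ht]
    refine lt_domNum_of_mul_lt_card _ (degree_subdiv_le K F hF hK ht) ?_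
    simp only [Fintype.card_sum, Fintype.card_fin, Fintype.card_coe, hcard]
    omega
  · rw [card_incidenceFinset_eq_degree, hstar, Nat.add_sub_cancel]
  · rw [domNum_completeBipartiteGraph_fin_two ht]
    refine le_antisymm domNum_completeBipartiteGraph_fin_two_subdiv_incidenceFinset_le ?_
    refine lt_domNum_of_mul_lt_card _ (degree_subdiv_le K _ hstarE hK ht) ?_
    simp only [Fintype.card_sum, Fintype.card_fin, Fintype.card_coe,
      card_incidenceFinset_eq_degree, hstar]
    omega
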